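/- arXiv:2307.16746 — 2 statements merged into one kernel-verified Lean document; each statement's English description precedes it below -/
import Mathlib

section
/- Sufficiency direction of NCPTP-local passivity: let $C$ be a Hermitian operator on $\mathcal{H} \otimes \mathcal{H}$ (with $\mathcal{H} = \mathbb{C}^d$) and define $C'$ by $\langle \alpha\beta | C' | \alpha'\beta'\rangle = \delta_{\alpha\alpha'} \sum_i \langle ii | C | \beta'\beta \rangle$. If $C - C' \succeq 0$, then for every unitary $U$ on $\mathcal{H}$, $\sum_{i,j} \mathrm{Tr}\big[ C \, ( U |j\rangle\langle i| U^\dagger \otimes |j\rangle\langle i| ) \big] \ge \sum_{s,i} \langle ss | C | ii \rangle$. -/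
/-!
The trace sum is the quadratic form `⟨Ψ_U| C |Ψ_U⟩` of the Choi vector `Ψ_U` of `U`, and
`C' = I ⊗ B` with `B β β' = ∑ᵢ ⟨ii| C |β'β⟩`. For such a product,
`⟨Ψ_U| I ⊗ B |Ψ_U⟩ = Tr (B Uᵀ Ū) = Tr B` by unitarity, which is the right-hand side, so the
inequality is positivity of `C - C'` evaluated at `Ψ_U`.
-/

open ComplexOrder Matrix Kronecker

namespace Matrix

variable {l m n R : Type*}

theorem mul_single_one_mul_apply [Fintype m] [DecidableEq m] [NonAssocSemiring R]
    (A : Matrix l m R) (B : Matrix m n R) (i j : m) (a : l) (b : n) :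
    (A * single i j (1 : R) * B) a b = A a i * B j b := by
  simp [mul_apply, single_apply, ite_and]

/-- The unnormalised Choi vector `(U ⊗ I) ∑ⱼ |j j⟩`, whose `(α, β)` entry is `U α β`. -/
def choiVector (U : Matrix m n R) : m × n → R := vec Uᵀ

section CommSemiring

variable [Fintype m] [Fintype n] [DecidableEq n] [CommSemiring R] [StarRing R]

omit [Fintype m] in
theorem sum_mul_single_mul_conjTranspose_kronecker_single (U : Matrix m n R) :
    ∑ i : n, ∑ j : n, (U * single j i (1 : R) * Uᴴ) ⊗ₖ single j i (1 : R) =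
      vecMulVec (choiVector U) (star (choiVector U)) := by
  ext ⟨a, b⟩ ⟨a', b'⟩
  simp [sum_apply, kroneckerMap_apply, mul_single_one_mul_apply, single_apply, ite_and,
    choiVector, vecMulVec_apply]

theorem sum_trace_mul_kronecker_single_eq_star_choiVector_dotProduct
    (C : Matrix (m × n) (m × n) R) (U : Matrix m n R) :
    ∑ i : n, ∑ j : n, (C * ((U * single j i (1 : R) * Uᴴ) ⊗ₖ single j i (1 : R))).trace =
      star (choiVector U) ⬝ᵥ C *ᵥ choiVector U := by
  simp_rw [← trace_sum, ← Finset.mul_sum, sum_mul_single_mul_conjTranspose_kronecker_single,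
    mul_vecMulVec, trace_vecMulVec, dotProduct_comm]

end CommSemiring

theorem star_choiVector_dotProduct_one_kronecker_mulVec [Fintype n] [DecidableEq n] [CommRing R]
    [StarRing R] (U : unitaryGroup n R) (B : Matrix n n R) :
    star (choiVector (U : Matrix n n R)) ⬝ᵥ ((1 : Matrix n n R) ⊗ₖ B) *ᵥ
      choiVector (U : Matrix n n R) = trace B := by
  rw [choiVector, kronecker_mulVec_vec, star_vec_dotProduct_vec, transpose_one, mul_one,
    trace_mul_comm, mul_assoc, ← star_eq_conjTranspose,
    mem_unitaryGroup_iff.1 (transpose_mem_unitaryGroup_iff.2 U.2), mul_one]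

end Matrix

theorem ncptp_local_passivity_sufficient_general {d : ℕ}
    (C : Matrix (Fin d × Fin d) (Fin d × Fin d) ℂ)
    (C' : Matrix (Fin d × Fin d) (Fin d × Fin d) ℂ)
    (hC' : ∀ α β α' β', C' (α, β) (α', β') =
      if α = α' then ∑ i : Fin d, C (i, i) (β', β) else 0)
    (hpos : (C - C').PosSemidef) :
    ∀ U : Matrix.unitaryGroup (Fin d) ℂ,
      (∑ i : Fin d, ∑ j : Fin d,
        (C * (((U : Matrix (Fin d) (Fin d) ℂ) * Matrix.single j i 1 *
            star (U : Matrix (Fin d) (Fin d) ℂ)) ⊗ₖ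
          Matrix.single j i (1 : ℂ))).trace).re ≥
      (∑ s : Fin d, ∑ i : Fin d, C (s, s) (i, i)).re := by
  intro U
  set B : Matrix (Fin d) (Fin d) ℂ := of fun β β' => ∑ i, C (i, i) (β', β)
  have hC'_eq : C' = 1 ⊗ₖ B := by
    ext ⟨α, β⟩ ⟨α', β'⟩
    simp [hC', B, kroneckerMap_apply, one_apply, ite_mul]
  have htrace_B : trace B = ∑ s : Fin d, ∑ i : Fin d, C (s, s) (i, i) := by
    simp only [trace, diag, B, of_apply]; exact Finset.sum_comm
  have hquad := hpos.dotProduct_mulVec_nonneg (choiVector (U : Matrix (Fin d) (Fin d) ℂ))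
  rw [sub_mulVec, dotProduct_sub, sub_nonneg, hC'_eq,
    star_choiVector_dotProduct_one_kronecker_mulVec, htrace_B] at hquad
  rw [star_eq_conjTranspose, sum_trace_mul_kronecker_single_eq_star_choiVector_dotProduct]
  exact Complex.re_le_re hquad

/-- sufficiency direction of NCPTP-local passivity. If
`C - C' ⪰ 0`, where `⟨αβ|C'|α'β'⟩ = δ_{αα'} ∑ᵢ ⟨ii|C|β'β⟩`, then the
Choi-vector energy functional is minimized at `U = I`. -/
theorem ncptp_local_passivity_sufficient {d : ℕ}
    (C : Matrix (Fin d × Fin d) (Fin d × Fin d) ℂ) (hC : C.IsHermitian)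
    (C' : Matrix (Fin d × Fin d) (Fin d × Fin d) ℂ)
    (hC' : ∀ α β α' β', C' (α, β) (α', β') =
      if α = α' then ∑ i : Fin d, C (i, i) (β', β) else 0)
    (hpos : (C - C').PosSemidef) :
    ∀ U : Matrix.unitaryGroup (Fin d) ℂ,
      (∑ i : Fin d, ∑ j : Fin d,
        (C * (((U : Matrix (Fin d) (Fin d) ℂ) * Matrix.single j i 1 *
            star (U : Matrix (Fin d) (Fin d) ℂ)) ⊗ₖ
          Matrix.single j i (1 : ℂ))).trace).re ≥
      (∑ s : Fin d, ∑ i : Fin d, C (s, s) (i, i)).re :=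
  ncptp_local_passivity_sufficient_general C C' hC' hpos
end

section
/- Necessary condition for local energy minimality: let $X, Y$ be Hermitian on $\mathcal{H}_a \otimes \mathcal{H}_b$ and suppose $\mathrm{Tr}\big[(U\otimes I_b) Y (U^\dagger \otimes I_b) X\big] \ge \mathrm{Tr}(YX)$ for all unitaries $U$ on $\mathcal{H}_a$. Then $\mathrm{Tr}_b[Y, X] = 0$. -/
open ComplexOrder Matrix Kronecker

/-- Partial trace over the second tensor factor. -/
noncomputable def traceRight {a b : Type*} [Fintype b]
    (M : Matrix (a × b) (a × b) ℂ) : Matrix a a ℂ :=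
  fun i j => ∑ k : b, M (i, k) (j, k)

/-!
Along the unitary path `U_t = exp (t M)`, `M` anti-Hermitian, the energy
`t ↦ Re Tr[(U_t ⊗ 1) Y (U_t† ⊗ 1) X]` is minimal at `t = 0`, so its derivative there,
`Re Tr[[M ⊗ 1, Y] X] = Re Tr[M · Tr_b [Y, X]]`, vanishes. Since `C = Tr_b [Y, X]` is itself
anti-Hermitian, the choice `M = C†` gives `Tr (C† C) = 0`, hence `C = 0`.
-/

open NormedSpace

variable {a b : Type*}

theorem commutator_mem_skewAdjoint {R : Type*} [Ring R] [StarRing R] {x y : R}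
    (hx : IsSelfAdjoint x) (hy : IsSelfAdjoint y) : x * y - y * x ∈ skewAdjoint R := by
  rw [skewAdjoint.mem_iff, star_sub, star_mul, star_mul, hx.star_eq, hy.star_eq, neg_sub]

theorem traceRight_mem_skewAdjoint [Fintype b] {M : Matrix (a × b) (a × b) ℂ}
    (hM : M ∈ skewAdjoint (Matrix (a × b) (a × b) ℂ)) :
    traceRight M ∈ skewAdjoint (Matrix a a ℂ) := by
  rw [skewAdjoint.mem_iff] at hM ⊢
  ext i j
  simp only [star_apply, traceRight, star_sum, Matrix.neg_apply, ← Finset.sum_neg_distrib]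
  exact Finset.sum_congr rfl fun k _ => congrFun₂ hM (i, k) (j, k)

theorem trace_kronecker_one_mul [Fintype a] [Fintype b] [DecidableEq b]
    (M : Matrix a a ℂ) (A : Matrix (a × b) (a × b) ℂ) :
    ((M ⊗ₖ (1 : Matrix b b ℂ)) * A).trace = (M * traceRight A).trace := by
  simp only [trace, diag, mul_apply, traceRight, kroneckerMap_apply, one_apply,
    Fintype.sum_prod_type, mul_ite, mul_one, mul_zero, Finset.mul_sum]
  refine Finset.sum_congr rfl fun i _ => ?_
  rw [Finset.sum_comm]
  simp

theorem eq_zero_of_forall_skewAdjoint_re_trace_mul_eq_zero [Fintype a] {C : Matrix a a ℂ}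
    (hC : C ∈ skewAdjoint (Matrix a a ℂ))
    (h : ∀ M ∈ skewAdjoint (Matrix a a ℂ), (M * C).trace.re = 0) : C = 0 := by
  have hCstar : star C ∈ skewAdjoint (Matrix a a ℂ) := by
    rw [skewAdjoint.mem_iff, star_star, skewAdjoint.mem_iff.mp hC, neg_neg]
  have hnonneg : 0 ≤ (Cᴴ * C).trace := (posSemidef_conjTranspose_mul_self C).trace_nonneg
  rw [← trace_conjTranspose_mul_self_eq_zero_iff]
  exact Complex.ext (h _ hCstar) (Complex.nonneg_iff.mp hnonneg).2.symm

theorem hasDerivAt_exp_smul_mul_mul_exp_neg_smul {𝔸 : Type*} [NormedRing 𝔸]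
    [NormedAlgebra ℝ 𝔸] [CompleteSpace 𝔸] (N Y : 𝔸) :
    HasDerivAt (fun t : ℝ => exp (t • N) * Y * exp (-(t • N))) (N * Y - Y * N) 0 := by
  have := ((hasDerivAt_exp_smul_const (𝕂 := ℝ) N 0).mul_const Y).mul
    (hasDerivAt_exp_smul_const (𝕂 := ℝ) (-N) 0)
  simp only [zero_smul, neg_zero, exp_zero, one_mul, mul_one, mul_neg, smul_neg] at this
  rw [sub_eq_add_neg]
  exact this

theorem map_commutator_eq_zero_of_forall_le_map_exp_conj {𝔸 : Type*} [NormedRing 𝔸]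
    [NormedAlgebra ℝ 𝔸] [CompleteSpace 𝔸] (ℓ : 𝔸 →L[ℝ] ℝ) (N Y : 𝔸)
    (h : ∀ t : ℝ, ℓ Y ≤ ℓ (exp (t • N) * Y * exp (-(t • N)))) :
    ℓ (N * Y - Y * N) = 0 := by
  have hmin : IsLocalMin (fun t : ℝ => ℓ (exp (t • N) * Y * exp (-(t • N)))) 0 :=
    Filter.Eventually.of_forall fun t => by simpa using h t
  exact hmin.hasDerivAt_eq_zero
    (ℓ.hasFDerivAt.comp_hasDerivAt 0 (hasDerivAt_exp_smul_mul_mul_exp_neg_smul N Y))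

section MatrixExp

attribute [local instance] Matrix.linftyOpNormedRing Matrix.linftyOpNormedAlgebra

variable [Fintype a] [DecidableEq a]

theorem Matrix.exp_kronecker_one [Fintype b] [DecidableEq b] (A : Matrix a a ℂ) :
    exp (A ⊗ₖ (1 : Matrix b b ℂ)) = exp A ⊗ₖ (1 : Matrix b b ℂ) := by
  rw [kronecker_one, kronecker_one, exp_blockDiagonal]
  exact congrArg blockDiagonal
    (map_exp (Pi.constRingHom b (Matrix a a ℂ)) (continuous_pi fun _ => continuous_id) A).symm

theorem Matrix.star_exp_of_mem_skewAdjoint {M : Matrix a a ℂ}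
    (hM : M ∈ skewAdjoint (Matrix a a ℂ)) : star (exp M) = exp (-M) := by
  rw [star_eq_conjTranspose, ← exp_conjTranspose, ← star_eq_conjTranspose,
    skewAdjoint.mem_iff.mp hM]

theorem Matrix.exp_mem_unitaryGroup_of_mem_skewAdjoint {M : Matrix a a ℂ}
    (hM : M ∈ skewAdjoint (Matrix a a ℂ)) : exp M ∈ unitaryGroup a ℂ := by
  rw [mem_unitaryGroup_iff', star_exp_of_mem_skewAdjoint hM,
    ← exp_add_of_commute _ _ (Commute.refl M).neg_left, neg_add_cancel, exp_zero]

theorem re_trace_mul_traceRight_commutator_eq_zero [Fintype b] [DecidableEq b]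
    (Y X : Matrix (a × b) (a × b) ℂ)
    (h : ∀ U : unitaryGroup a ℂ, (Y * X).trace.re ≤
      (((U : Matrix a a ℂ) ⊗ₖ (1 : Matrix b b ℂ)) * Y *
        (star (U : Matrix a a ℂ) ⊗ₖ (1 : Matrix b b ℂ)) * X).trace.re)
    {M : Matrix a a ℂ} (hM : M ∈ skewAdjoint (Matrix a a ℂ)) :
    (M * traceRight (Y * X - X * Y)).trace.re = 0 := by
  set N : Matrix (a × b) (a × b) ℂ := M ⊗ₖ (1 : Matrix b b ℂ)
  let ℓ : Matrix (a × b) (a × b) ℂ →L[ℝ] ℝ := Complex.reCLM.comp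
    ((traceLinearMap (a × b) ℂ ℂ).restrictScalars ℝ ∘ₗ LinearMap.mulRight ℝ X).toContinuousLinearMap
  have hmin (t : ℝ) : ℓ Y ≤ ℓ (exp (t • N) * Y * exp (-(t • N))) := by
    have htM := skewAdjoint.smul_mem t hM
    have := h ⟨exp (t • M), exp_mem_unitaryGroup_of_mem_skewAdjoint htM⟩
    rwa [star_exp_of_mem_skewAdjoint htM, ← neg_smul, ← exp_kronecker_one, ← exp_kronecker_one,
      smul_kronecker, smul_kronecker, neg_smul] at this
  have hcyc : ((N * Y - Y * N) * X).trace = (N * (Y * X - X * Y)).trace := by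
    rw [sub_mul, mul_sub, trace_sub, trace_sub, mul_assoc, mul_assoc, trace_mul_comm Y, mul_assoc]
  have := map_commutator_eq_zero_of_forall_le_map_exp_conj ℓ N Y hmin
  rwa [← trace_kronecker_one_mul, ← hcyc]

end MatrixExp

/-- if `Tr[(U ⊗ I_b) Y (U† ⊗ I_b) X] ≥ Tr(YX)` for all unitaries
`U` on `H_a`, with `X`, `Y` Hermitian, then `Tr_b [Y,X] = 0`. -/
theorem local_energy_min_implies_commutator_traceRight_zero {da db : ℕ}
    (Y X : Matrix (Fin da × Fin db) (Fin da × Fin db) ℂ)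
    (hY : Y.IsHermitian) (hX : X.IsHermitian)
    (h : ∀ U : Matrix.unitaryGroup (Fin da) ℂ,
      ((Y * X).trace).re ≤
        ((((U : Matrix (Fin da) (Fin da) ℂ) ⊗ₖ (1 : Matrix (Fin db) (Fin db) ℂ)) *
          Y *
          ((star (U : Matrix (Fin da) (Fin da) ℂ)) ⊗ₖ
            (1 : Matrix (Fin db) (Fin db) ℂ)) * X).trace).re) :
    traceRight (Y * X - X * Y) = 0 :=
  eq_zero_of_forall_skewAdjoint_re_trace_mul_eq_zero
    (traceRight_mem_skewAdjoint (commutator_mem_skewAdjoint hY hX))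
    fun _ hM => re_trace_mul_traceRight_commutator_eq_zero Y X h hM
end
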